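/- For fixed m and fixed q ∈ (0, 1/2], the ncDNA capacity as a function of γ ∈ [0,1] satisfies C_nc(γ=1) ≤ C_nc(γ) ≤ C_nc(γ=0). -/

import Mathlib

open Real

/-- ncDNA capacity after `m` mutation stages, as a function of the Kimura
parameters `q` and `γ`. -/
noncomputable def Cnc (q : ℝ) (m : ℕ) (γ : ℝ) : ℝ :=
  2 + (1 + 2 * (1 - 2 * (1 - γ / 3) * q) ^ m + (1 - 4 * γ / 3 * q) ^ m) / 4
        * logb 2 ((1 + 2 * (1 - 2 * (1 - γ / 3) * q) ^ m + (1 - 4 * γ / 3 * q) ^ m) / 4)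
    + (1 - 2 * (1 - 2 * (1 - γ / 3) * q) ^ m + (1 - 4 * γ / 3 * q) ^ m) / 4
        * logb 2 ((1 - 2 * (1 - 2 * (1 - γ / 3) * q) ^ m + (1 - 4 * γ / 3 * q) ^ m) / 4)
    + (1 - (1 - 4 * γ / 3 * q) ^ m) / 2 * logb 2 ((1 - (1 - 4 * γ / 3 * q) ^ m) / 4)

/-!
Write `x = μᵐ` and `y = λᵐ`. For `γ ∈ (0, 1)` one has `0 ≤ x ≤ y < 1`, and along the curve
`x' ≥ 0` and `2 x' ≤ -y'` (because `μ ≤ λ`). In this region `∂ₓC ≥ 0` and `∂ₓC ≤ 2 ∂_yC`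
(the latter is `(1 - y)/4 ≤ (1 - 2x + y)/4`), so
`dC/dγ = x' ∂ₓC + y' ∂_yC ≤ (2x' + y') ∂_yC ≤ 0`: the capacity is antitone in `γ` on `[0, 1]`.
-/

namespace Kimura

noncomputable def kimuraMu (q γ : ℝ) : ℝ := 1 - 2 * (1 - γ / 3) * q

noncomputable def kimuraLambda (q γ : ℝ) : ℝ := 1 - 4 * γ / 3 * q

/-- `2 - H` in bits of the row `((1 + 2x + y)/4, (1 - 2x + y)/4, (1 - y)/4, (1 - y)/4)` of `Πᵐ`,
where `x = μᵐ`, `y = λᵐ`. -/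
noncomputable def capacity (x y : ℝ) : ℝ :=
  2 - (negMulLog ((1 + 2 * x + y) / 4) + negMulLog ((1 - 2 * x + y) / 4)
    + 2 * negMulLog ((1 - y) / 4)) / log 2

noncomputable def capacityDerivX (x y : ℝ) : ℝ :=
  (log ((1 + 2 * x + y) / 4) - log ((1 - 2 * x + y) / 4)) / (2 * log 2)

noncomputable def capacityDerivY (x y : ℝ) : ℝ :=
  (log ((1 + 2 * x + y) / 4) + log ((1 - 2 * x + y) / 4) - 2 * log ((1 - y) / 4)) / (4 * log 2)

theorem Cnc_eq_capacity (q : ℝ) (m : ℕ) (γ : ℝ) :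
    Cnc q m γ = capacity (kimuraMu q γ ^ m) (kimuraLambda q γ ^ m) := by
  simp only [Cnc, capacity, kimuraMu, kimuraLambda, negMulLog, logb]
  ring

theorem continuous_Cnc (q : ℝ) (m : ℕ) : Continuous (Cnc q m) := by
  simp only [funext (Cnc_eq_capacity q m), capacity, kimuraMu, kimuraLambda]
  fun_prop

section Calculus

variable {x y x' y' : ℝ}

theorem capacity_args_pos (hx : 0 ≤ x) (hxy : x ≤ y) (hy : y < 1) :
    0 < (1 + 2 * x + y) / 4 ∧ 0 < (1 - 2 * x + y) / 4 ∧ 0 < (1 - y) / 4 := by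
  refine ⟨?_, ?_, ?_⟩ <;> linarith

/-- Chain rule for `capacity` along a curve; the `-1` in `(negMulLog)' = -log - 1` cancels
because the row sums to one. -/
theorem hasDerivAt_capacity_comp {f g : ℝ → ℝ} {t : ℝ} (hf : HasDerivAt f x' t)
    (hg : HasDerivAt g y' t) (h₁ : (1 + 2 * f t + g t) / 4 ≠ 0)
    (h₂ : (1 - 2 * f t + g t) / 4 ≠ 0) (h₃ : (1 - g t) / 4 ≠ 0) :
    HasDerivAt (fun s => capacity (f s) (g s))
      (x' * capacityDerivX (f t) (g t) + y' * capacityDerivY (f t) (g t)) t := by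
  have d₁ := (hasDerivAt_negMulLog h₁).comp t
    ((((hf.const_mul 2).const_add 1).add hg).div_const 4)
  have d₂ := (hasDerivAt_negMulLog h₂).comp t
    ((((hf.const_mul 2).const_sub 1).add hg).div_const 4)
  have d₃ := (hasDerivAt_negMulLog h₃).comp t ((hg.const_sub 1).div_const 4)
  refine ((((d₁.add d₂).add (d₃.const_mul 2)).div_const (log 2)).const_sub 2).congr_deriv ?_
  have : log 2 ≠ 0 := (log_pos one_lt_two).ne'
  simp only [capacityDerivX, capacityDerivY]
  field_simp
  ring

theorem capacityDerivX_nonneg (hx : 0 ≤ x) (hxy : x ≤ y) (hy : y < 1) :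
    0 ≤ capacityDerivX x y := by
  obtain ⟨-, h₂, -⟩ := capacity_args_pos hx hxy hy
  have := log_le_log h₂ (by linarith : (1 - 2 * x + y) / 4 ≤ (1 + 2 * x + y) / 4)
  exact div_nonneg (by linarith) (by positivity)

theorem capacityDerivX_le_two_mul_capacityDerivY (hx : 0 ≤ x) (hxy : x ≤ y) (hy : y < 1) :
    capacityDerivX x y ≤ 2 * capacityDerivY x y := by
  obtain ⟨-, -, h₃⟩ := capacity_args_pos hx hxy hy
  have := log_le_log h₃ (by linarith : (1 - y) / 4 ≤ (1 - 2 * x + y) / 4)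
  have hl : 0 < log 2 := log_pos one_lt_two
  rw [capacityDerivX, capacityDerivY, div_le_iff₀ (by positivity)]
  field_simp
  linarith

theorem capacity_deriv_nonpos (hx : 0 ≤ x) (hxy : x ≤ y) (hy : y < 1) (hx' : 0 ≤ x')
    (hxy' : 2 * x' ≤ -y') :
    x' * capacityDerivX x y + y' * capacityDerivY x y ≤ 0 := by
  have h₁ := capacityDerivX_nonneg hx hxy hy
  have h₂ := capacityDerivX_le_two_mul_capacityDerivY hx hxy hy
  calc x' * capacityDerivX x y + y' * capacityDerivY x y
      ≤ x' * (2 * capacityDerivY x y) + y' * capacityDerivY x y := by gcongr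
    _ = (2 * x' + y') * capacityDerivY x y := by ring
    _ ≤ 0 := mul_nonpos_of_nonpos_of_nonneg (by linarith) (by linarith)

end Calculus

section Curve

theorem hasDerivAt_kimuraMu (q γ : ℝ) : HasDerivAt (kimuraMu q) (2 * q / 3) γ := by
  have := ((((hasDerivAt_id γ).div_const 3).const_sub 1).const_mul 2 |>.mul_const q).const_sub 1
  exact this.congr_deriv (by ring)

theorem hasDerivAt_kimuraLambda (q γ : ℝ) :
    HasDerivAt (kimuraLambda q) (-(4 * q / 3)) γ := by
  have := ((((hasDerivAt_id γ).const_mul 4).div_const 3).mul_const q).const_sub 1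
  exact this.congr_deriv (by ring)

variable {q γ : ℝ}

theorem kimuraMu_nonneg (hq0 : 0 ≤ q) (hq1 : q ≤ 1 / 2) (hγ0 : 0 ≤ γ) :
    0 ≤ kimuraMu q γ := by
  unfold kimuraMu; nlinarith

theorem kimuraMu_le_kimuraLambda (hq0 : 0 ≤ q) (hγ1 : γ ≤ 1) :
    kimuraMu q γ ≤ kimuraLambda q γ := by
  unfold kimuraMu kimuraLambda; nlinarith

theorem kimuraLambda_lt_one (hq0 : 0 < q) (hγ0 : 0 < γ) : kimuraLambda q γ < 1 := by
  unfold kimuraLambda; nlinarith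

theorem kimura_pow_bounds (hq0 : 0 < q) (hq1 : q ≤ 1 / 2) (hγ0 : 0 < γ) (hγ1 : γ ≤ 1)
    {m : ℕ} (hm : m ≠ 0) :
    0 ≤ kimuraMu q γ ^ m ∧ kimuraMu q γ ^ m ≤ kimuraLambda q γ ^ m ∧
      kimuraLambda q γ ^ m < 1 := by
  have hμ := kimuraMu_nonneg hq0.le hq1 hγ0.le
  have hμ_le := kimuraMu_le_kimuraLambda hq0.le hγ1
  exact ⟨pow_nonneg hμ m, pow_le_pow_left₀ hμ hμ_le m,
    pow_lt_one₀ (hμ.trans hμ_le) (kimuraLambda_lt_one hq0 hγ0) hm⟩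

end Curve

theorem Cnc_antitoneOn {q : ℝ} (hq0 : 0 < q) (hq1 : q ≤ 1 / 2) {m : ℕ} (hm : m ≠ 0) :
    AntitoneOn (Cnc q m) (Set.Icc 0 1) := by
  refine antitoneOn_of_hasDerivWithinAt_nonpos (convex_Icc 0 1) (continuous_Cnc q m).continuousOn
    (f' := fun γ =>
      m * kimuraMu q γ ^ (m - 1) * (2 * q / 3) *
          capacityDerivX (kimuraMu q γ ^ m) (kimuraLambda q γ ^ m)
        + m * kimuraLambda q γ ^ (m - 1) * -(4 * q / 3) *
          capacityDerivY (kimuraMu q γ ^ m) (kimuraLambda q γ ^ m))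
    (fun γ hγ => ?_) (fun γ hγ => ?_) <;> rw [interior_Icc] at hγ <;>
    obtain ⟨hx, hxy, hy⟩ := kimura_pow_bounds hq0 hq1 hγ.1 hγ.2.le hm
  · obtain ⟨h₁, h₂, h₃⟩ := capacity_args_pos hx hxy hy
    rw [funext (Cnc_eq_capacity q m)]
    exact (hasDerivAt_capacity_comp ((hasDerivAt_kimuraMu q γ).pow m)
      ((hasDerivAt_kimuraLambda q γ).pow m) h₁.ne' h₂.ne' h₃.ne').hasDerivWithinAt
  · have hμ := kimuraMu_nonneg hq0.le hq1 hγ.1.le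
    refine capacity_deriv_nonpos hx hxy hy (by positivity) ?_
    have : m * kimuraMu q γ ^ (m - 1) * (4 * q / 3)
        ≤ m * kimuraLambda q γ ^ (m - 1) * (4 * q / 3) := by
      gcongr
      exact kimuraMu_le_kimuraLambda hq0.le hγ.2.le
    linarith

end Kimura

theorem Cnc_bounds (q : ℝ) (hq0 : 0 < q) (hq1 : q ≤ 1 / 2) (m : ℕ) (hm : 1 ≤ m)
    (γ : ℝ) (hγ0 : 0 ≤ γ) (hγ1 : γ ≤ 1) :
    Cnc q m 1 ≤ Cnc q m γ ∧ Cnc q m γ ≤ Cnc q m 0 := by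
  have h := Kimura.Cnc_antitoneOn hq0 hq1 (Nat.one_le_iff_ne_zero.1 hm)
  exact ⟨h ⟨hγ0, hγ1⟩ (Set.right_mem_Icc.2 zero_le_one) hγ1,
    h (Set.left_mem_Icc.2 zero_le_one) ⟨hγ0, hγ1⟩ hγ0⟩
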